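/- If a superior edge set 𝓔 = E_{k_1} ∪ E_{k_2} ∪ ... ∪ E_{k_q}, where the k_i are pairwise distinct and each E_{k_i} is a k_i-superior edge set with respect to G, is inserted into a graph G, then the core number of every vertex increases by at most 1. -/

import Mathlib

open SimpleGraph

/-- The core number of a vertex: the largest `k` such that the vertex lies in a
subgraph of `G` with minimum degree at least `k`. -/
noncomputable def coreNumber {V : Type*} (G : SimpleGraph V) (v : V) : ℕ :=
  sSup {k : ℕ | ∃ H : G.Subgraph, v ∈ H.verts ∧ ∀ w ∈ H.verts, k ≤ (H.neighborSet w).ncard}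

/-- `S` is a `k`-superior edge set of new edges with respect to `G`. -/
def IsKSuperiorInsertSet {V : Type*} (G : SimpleGraph V) (k : ℕ) (S : Set (Sym2 V)) : Prop :=
  (∀ e ∈ S, e ∉ G.edgeSet ∧ ∃ u v : V, u ≠ v ∧ e = s(u,v) ∧
      coreNumber G u = k ∧ coreNumber G u ≤ coreNumber G v) ∧
  ∀ e₁ ∈ S, ∀ e₂ ∈ S, e₁ ≠ e₂ → ∀ u : V, u ∈ e₁ → u ∈ e₂ → k < coreNumber G u

/-!
Induction on the old core number `n` of a vertex `u`. If `u` had new core number at least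
`n + 2`, it would lie in a subgraph `H` of the new graph of minimum degree at least `n + 2`; by
induction every vertex of `H` has old core number at least `n`. A superior edge set gives a vertex
of old core number `n` at most one new edge towards vertices of old core number at least `n`, so
deleting the new edges from `H` leaves every such vertex with degree at least `n + 1`. Glued to the
`(n + 1)`-core of `G`, this is a subgraph of `G` of minimum degree at least `n + 1` containing `u`,
contradicting `coreNumber G u = n`.
-/

namespace SimpleGraph.Subgraph

variable {V : Type*} {G : SimpleGraph V}

def HasMinDegree (H : G.Subgraph) (k : ℕ) : Prop :=
  ∀ w ∈ H.verts, k ≤ (H.neighborSet w).ncard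

variable [Finite V] {k : ℕ}

theorem HasMinDegree.le_ncard_neighborSet {H K : G.Subgraph} (hH : H.HasMinDegree k)
    (hle : H ≤ K) {w : V} (hw : w ∈ H.verts) : k ≤ (K.neighborSet w).ncard :=
  (hH w hw).trans (Set.ncard_le_ncard (neighborSet_subset_of_subgraph hle w))

theorem hasMinDegree_sSup {s : Set G.Subgraph} (hs : ∀ H ∈ s, H.HasMinDegree k) :
    (sSup s).HasMinDegree k := by
  intro w hw
  rw [verts_sSup, Set.mem_iUnion₂] at hw
  obtain ⟨H, hH, hwH⟩ := hw
  exact (hs H hH).le_ncard_neighborSet (le_sSup hH) hwH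

end SimpleGraph.Subgraph

open SimpleGraph.Subgraph

section CoreNumber

variable {V : Type*} [Finite V] {G : SimpleGraph V} {k : ℕ}

theorem bddAbove_setOf_hasMinDegree (G : SimpleGraph V) (v : V) :
    BddAbove {k : ℕ | ∃ H : G.Subgraph, v ∈ H.verts ∧ H.HasMinDegree k} :=
  ⟨Nat.card V, by
    rintro _ ⟨H, hv, hH⟩
    exact (hH v hv).trans (Set.ncard_le_card _)⟩

theorem le_coreNumber_iff {v : V} :
    k ≤ coreNumber G v ↔ ∃ H : G.Subgraph, v ∈ H.verts ∧ H.HasMinDegree k := by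
  refine ⟨fun hk => ?_, fun hH => le_csSup (bddAbove_setOf_hasMinDegree G v) hH⟩
  obtain ⟨H, hv, hH⟩ : ∃ H : G.Subgraph, v ∈ H.verts ∧ H.HasMinDegree (coreNumber G v) :=
    Nat.sSup_mem (s := {k | ∃ H : G.Subgraph, v ∈ H.verts ∧ H.HasMinDegree k})
      ⟨0, ⊤, trivial, fun _ _ => Nat.zero_le _⟩ (bddAbove_setOf_hasMinDegree G v)
  exact ⟨H, hv, fun w hw => hk.trans (hH w hw)⟩

theorem le_coreNumber_of_forall_or (H : G.Subgraph)
    (hH : ∀ w ∈ H.verts, k ≤ coreNumber G w ∨ k ≤ (H.neighborSet w).ncard)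
    {v : V} (hv : v ∈ H.verts) : k ≤ coreNumber G v := by
  set C := sSup {D : G.Subgraph | D.HasMinDegree k}
  have hC : C.HasMinDegree k := hasMinDegree_sSup fun _ hD => hD
  have hHC : (H ⊔ C).HasMinDegree k := by
    rintro w (hwH | hwC)
    · rcases hH w hwH with hcore | hdeg
      · obtain ⟨D, hwD, hD⟩ := le_coreNumber_iff.1 hcore
        exact hD.le_ncard_neighborSet ((le_sSup hD).trans le_sup_right) hwD
      · exact hdeg.trans (Set.ncard_le_ncard (neighborSet_subset_of_subgraph le_sup_left w))
    · exact hC.le_ncard_neighborSet le_sup_right hwC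
  exact le_coreNumber_iff.2 ⟨H ⊔ C, Or.inl hv, hHC⟩

end CoreNumber

section Insertion

variable {V : Type*} [Finite V] {G : SimpleGraph V} {S : Set (Sym2 V)}

/-- `H.comap (Hom.ofLE le_sup_left)` is `H` with the inserted edges removed. -/
theorem ncard_neighborSet_le_comap_add (H : (G ⊔ fromEdgeSet S).Subgraph) (w : V) :
    (H.neighborSet w).ncard ≤
      ((H.comap (Hom.ofLE le_sup_left)).neighborSet w).ncard +
        {x | x ∈ H.neighborSet w ∧ s(w, x) ∈ S}.ncard := by
  refine (Set.ncard_le_ncard fun x (hx : H.Adj w x) => ?_).trans (Set.ncard_union_le _ _)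
  by_cases hG : G.Adj w x
  · exact Or.inl ⟨hG, hx⟩
  · have hnew := H.adj_sub hx
    rw [SimpleGraph.sup_adj, fromEdgeSet_adj] at hnew
    exact Or.inr ⟨hx, hnew.resolve_left hG |>.1⟩

theorem coreNumber_sup_fromEdgeSet_le_succ
    (hS : ∀ w, {x | coreNumber G w ≤ coreNumber G x ∧ s(w, x) ∈ S}.Subsingleton) (v : V) :
    coreNumber (G ⊔ fromEdgeSet S) v ≤ coreNumber G v + 1 := by
  induction hn : coreNumber G v using Nat.strong_induction_on generalizing v with
  | _ n ih =>
  by_contra! hv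
  obtain ⟨H, hvH, hH⟩ := le_coreNumber_iff.1 (Nat.succ_le_of_lt hv)
  have hlow : ∀ w ∈ H.verts, n ≤ coreNumber G w := by
    intro w hw
    by_contra! hwn
    have := ih _ hwn w rfl
    have := le_coreNumber_iff.2 ⟨H, hw, hH⟩
    omega
  have hHG : ∀ w ∈ H.verts, n + 1 ≤ coreNumber G w ∨
      n + 1 ≤ ((H.comap (Hom.ofLE le_sup_left)).neighborSet w).ncard := by
    intro w hw
    refine (hlow w hw).lt_or_eq.imp id fun hwn => ?_
    have hnew : {x | x ∈ H.neighborSet w ∧ s(w, x) ∈ S}.ncard ≤ 1 :=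
      Set.ncard_le_one_iff_subsingleton.2 <| (hS w).anti fun x ⟨hx, hxS⟩ =>
        ⟨hwn ▸ hlow x (H.edge_vert (H.adj_symm hx)), hxS⟩
    have := ncard_neighborSet_le_comap_add H w
    have := hH w hw
    omega
  have := le_coreNumber_of_forall_or (H.comap (Hom.ofLE le_sup_left)) hHG hvH
  omega

end Insertion

section SuperiorEdgeSet

variable {V : Type*} {G : SimpleGraph V} {k : ℕ} {F : Set (Sym2 V)}

theorem IsKSuperiorInsertSet.eq_min (hF : IsKSuperiorInsertSet G k F) {w x : V}
    (he : s(w, x) ∈ F) : k = min (coreNumber G w) (coreNumber G x) := by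
  obtain ⟨-, a, b, -, hab, hak, hle⟩ := hF.1 _ he
  rcases Sym2.eq_iff.1 hab with ⟨rfl, rfl⟩ | ⟨rfl, rfl⟩ <;> omega

theorem IsKSuperiorInsertSet.subsingleton (hF : IsKSuperiorInsertSet G k F) {w : V}
    (hw : coreNumber G w ≤ k) : {x | s(w, x) ∈ F}.Subsingleton := by
  intro x₁ hx₁ x₂ hx₂
  by_contra hne
  have hedge : s(w, x₁) ≠ s(w, x₂) := fun h => hne (Sym2.congr_right.1 h)
  have := hF.2 _ hx₁ _ hx₂ hedge w (Sym2.mem_mk_left w x₁) (Sym2.mem_mk_left w x₂)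
  omega

theorem subsingleton_biUnion_of_isKSuperiorInsertSet (ks : Finset ℕ) {F : ℕ → Set (Sym2 V)}
    (hF : ∀ k ∈ ks, IsKSuperiorInsertSet G k (F k)) (w : V) :
    {x | coreNumber G w ≤ coreNumber G x ∧ s(w, x) ∈ ⋃ k ∈ ks, F k}.Subsingleton := by
  intro x₁ ⟨hx₁, he₁⟩ x₂ ⟨hx₂, he₂⟩
  simp only [Set.mem_iUnion] at he₁ he₂
  obtain ⟨k₁, hk₁, he₁⟩ := he₁
  obtain ⟨k₂, hk₂, he₂⟩ := he₂
  have h₁ := (hF k₁ hk₁).eq_min he₁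
  have h₂ := (hF k₂ hk₂).eq_min he₂
  obtain rfl : k₁ = k₂ := by omega
  exact (hF k₁ hk₁).subsingleton (by omega) he₁ he₂

end SuperiorEdgeSet

theorem superiorInsertSet_core_increase_le_one {V : Type*} [Fintype V] (G : SimpleGraph V)
    (ks : Finset ℕ) (F : ℕ → Set (Sym2 V))
    (hF : ∀ k ∈ ks, IsKSuperiorInsertSet G k (F k))
    (S : Set (Sym2 V)) (hS : S = ⋃ k ∈ ks, F k) (v : V) :
    coreNumber (G ⊔ fromEdgeSet S) v ≤ coreNumber G v + 1 := by
  subst hS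
  exact coreNumber_sup_fromEdgeSet_le_succ (subsingleton_biUnion_of_isKSuperiorInsertSet ks hF) v
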